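/- arXiv:1412.4646 — 2 statements merged into one kernel-verified Lean document; each statement's English description precedes it below -/
import Mathlib

section
/- In any word w, each position k > 0 is the starting position of the assigned greatest proper suffix of at most one run; here each run [i..j] of smallest period p is assigned the starting position of the lexicographically greatest proper suffix of w[i..j] with respect to ordering < if j+1 < |w| and w[j+1] > w[j-p+1], and with respect to the reverse ordering otherwise. -/
open List

universe u

/-- The factor `w[i..j]` of a word (inclusive positions). -/
def factor {α : Type u} (w : List α) (i j : ℕ) : List α := (w.drop i).take (j - i + 1)

/-- `p` is a period length of the word `u`. -/
def HasPeriodLen {α : Type u} (u : List α) (p : ℕ) : Prop :=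
  1 ≤ p ∧ ∀ k, k + p < u.length → u[k]? = u[k + p]?

/-- The smallest period of a word. -/
noncomputable def minPeriod {α : Type u} (u : List α) : ℕ := sInf {p | HasPeriodLen u p}

/-- `[i..j]` is a run in `w`: the factor is periodic with smallest period at most half
its length, and the periodicity extends neither to the left nor to the right. -/
def IsRun {α : Type u} (w : List α) (i j : ℕ) : Prop :=
  i < j ∧ j < w.length ∧
  2 * minPeriod (factor w i j) ≤ j - i + 1 ∧
  (0 < i → minPeriod (factor w i j) < minPeriod (factor w (i - 1) j)) ∧
  (j + 1 < w.length → minPeriod (factor w i j) < minPeriod (factor w i (j + 1)))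
/-- `k` is the starting position of the greatest proper suffix of the factor `w[i..j]`,
with respect to the strict order `lt` on words. -/
def IsGreatestProperSuffixPos {α : Type u} (lt : List α → List α → Prop)
    (w : List α) (i j k : ℕ) : Prop :=
  i < k ∧ k ≤ j ∧ ∀ k', i < k' → k' ≤ j → k' ≠ k → lt (factor w k' j) (factor w k j)

/-- The run `[i..j]` with smallest period `p` is assigned the starting position of its
greatest proper suffix with respect to `<` if `j+1 < |w|` and `w[j+1] > w[j-p+1]`, and with
respect to the reverse ordering otherwise. -/
noncomputable def AssignedPos {α : Type u} [LinearOrder α] (w : List α) (i j k : ℕ) : Prop :=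
  ((j + 1 < w.length ∧
      ∃ a b, w[j + 1]? = some a ∧ w[j + 1 - minPeriod (factor w i j)]? = some b ∧ b < a) →
    IsGreatestProperSuffixPos (List.Lex (· < ·)) w i j k) ∧
  (¬ (j + 1 < w.length ∧
      ∃ a b, w[j + 1]? = some a ∧ w[j + 1 - minPeriod (factor w i j)]? = some b ∧ b < a) →
    IsGreatestProperSuffixPos (List.Lex (· > ·)) w i j k)

/-!
Let `p` be the smallest period of a run `[i..j]` and `k` its assigned position. Comparing the
suffix at `k` with the one at `k - p`, which has it as a prefix, gives `i < k ≤ i + p`.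

Suppose two runs share `k` and `j < j'`. The longer run compares the suffixes at `k + p` and at
`k`, which first differ where the period `p` breaks, so its order puts `w[j+1]` below
`w[j+1-p]`; by the rule choosing the order of `[i..j]`, the two runs use opposite orders. Under
opposite orders a first difference between the suffixes at `k + 1` and at `k` would be ranked
both ways, so `w[k..j]` is constant, hence `p = 1`, and the letter change at `j + 1` contradicts
the choice of `k` in `[i'..j']`.

Suppose both runs end at `j` and `i < i'`. Their periods satisfy `q < p` and `q ∤ p`, and with
`r = p mod q` the word is `r`-periodic from `k - r` up to the first break `m` of the shift by
`r` in `[i'..j]`. The suffixes at `k - r` and at `k + r`, both smaller than the one at `k`, then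
compare `w[m]` and `w[m + r]` in opposite directions.
-/

variable {α : Type u}

theorem length_factor {w : List α} {i j : ℕ} (hij : i ≤ j) (hj : j < w.length) :
    (factor w i j).length = j - i + 1 := by
  simp only [factor, length_take, length_drop]
  omega

theorem getElem?_factor (w : List α) {i j s : ℕ} (hs : s < j - i + 1) :
    (factor w i j)[s]? = w[i + s]? := by
  simp [factor, hs, getElem?_drop]

/-- Periodicity of the factor `w[i..j]` in positions of `w`; unlike `HasPeriodLen`, it allows
`p = 0`. -/
def PeriodicOn (w : List α) (i j p : ℕ) : Prop :=
  ∀ x, i ≤ x → x + p ≤ j → w[x]? = w[x + p]?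

theorem hasPeriodLen_minPeriod (u : List α) : HasPeriodLen u (minPeriod u) :=
  Nat.sInf_mem (s := {p | HasPeriodLen u p}) ⟨u.length + 1, by omega, fun _ _ => by omega⟩

theorem one_le_minPeriod (u : List α) : 1 ≤ minPeriod u :=
  (hasPeriodLen_minPeriod u).1

theorem minPeriod_factor_le {w : List α} {i j p : ℕ} (hp : 1 ≤ p) (h : PeriodicOn w i j p) :
    minPeriod (factor w i j) ≤ p := by
  refine Nat.sInf_le ⟨hp, fun s hs => ?_⟩
  have hlen : (factor w i j).length ≤ j - i + 1 := by simp [factor]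
  rw [getElem?_factor w (by omega), getElem?_factor w (by omega), ← Nat.add_assoc]
  exact h _ (by omega) (by omega)

theorem periodicOn_minPeriod {w : List α} {i j : ℕ} (hij : i ≤ j) (hj : j < w.length) :
    PeriodicOn w i j (minPeriod (factor w i j)) := by
  intro x hix hxj
  have := (hasPeriodLen_minPeriod (factor w i j)).2 (x - i)
    (by rw [length_factor hij hj]; omega)
  rwa [getElem?_factor w (by omega), getElem?_factor w (by omega), ← Nat.add_assoc,
    Nat.add_sub_cancel' hix] at this

namespace PeriodicOn

variable {w : List α} {i j p : ℕ}

theorem mono (h : PeriodicOn w i j p) {i' j' : ℕ} (hi : i ≤ i') (hj : j' ≤ j) :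
    PeriodicOn w i' j' p :=
  fun x hx hxp => h x (hi.trans hx) (hxp.trans hj)

theorem getElem?_add_mul (h : PeriodicOn w i j p) :
    ∀ (m : ℕ) {x : ℕ}, i ≤ x → x + p * m ≤ j → w[x]? = w[x + p * m]?
  | 0, _, _, _ => rfl
  | m + 1, x, hx, hxm => by
    rw [h x hx (by nlinarith), getElem?_add_mul h m (by omega) (by rw [Nat.mul_succ] at hxm; omega),
      Nat.mul_succ, Nat.add_comm (p * m), Nat.add_assoc]

theorem getElem?_eq_of_modEq (h : PeriodicOn w i j p) {x y : ℕ} (hx : i ≤ x) (hxj : x ≤ j)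
    (hy : i ≤ y) (hyj : y ≤ j) (hxy : x ≡ y [MOD p]) : w[x]? = w[y]? := by
  wlog hle : x ≤ y generalizing x y
  · exact (this hy hyj hx hxj hxy.symm (by omega)).symm
  obtain ⟨m, hm⟩ := (Nat.modEq_iff_dvd' hle).1 hxy
  rw [h.getElem?_add_mul m hx (by omega), ← hm, Nat.add_sub_cancel' hle]

theorem of_dvd {i' q : ℕ} (hp : PeriodicOn w i j p) (hq : PeriodicOn w i' j q) (hqp : q ∣ p)
    (hi'p : i' ≤ i + p) (hpj : i' + p ≤ j) : PeriodicOn w i j q := by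
  intro x hix hxq
  rcases le_or_gt i' x with hx | hx
  · exact hq x hx hxq
  have hmod : ∀ y, y + p ≡ y [MOD q] := fun y => by
    simpa using (Nat.modEq_zero_iff_dvd.2 hqp).add_left y
  rw [hp x hix (by omega)]
  rcases le_or_gt i' (x + q) with hxq' | hxq'
  · exact hq.getElem?_eq_of_modEq (by omega) (by omega) hxq' hxq
      ((hmod x).trans (Nat.add_modEq_right).symm)
  · rw [hp (x + q) (by omega) (by omega)]
    exact hq.getElem?_eq_of_modEq (by omega) (by omega) (by omega) (by omega)
      ((hmod x).trans ((hmod (x + q)).trans Nat.add_modEq_right).symm)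

theorem exists_first_mismatch {r : ℕ} (h : ¬ PeriodicOn w i j r) :
    ∃ m, i ≤ m ∧ m + r ≤ j ∧ w[m]? ≠ w[m + r]? ∧ ∀ z, i ≤ z → z < m → w[z]? = w[z + r]? := by
  classical
  have hex : ∃ m, i ≤ m ∧ m + r ≤ j ∧ w[m]? ≠ w[m + r]? := by
    simpa [PeriodicOn] using h
  obtain ⟨him, hmj, hne⟩ := Nat.find_spec hex
  refine ⟨Nat.find hex, him, hmj, hne, fun z hiz hzm => ?_⟩
  by_contra hz
  exact Nat.find_min hex hzm ⟨hiz, by omega, hz⟩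

theorem exists_first_mismatch_lt_add {q r : ℕ} (hq : PeriodicOn w i j q) (hq0 : 0 < q)
    (hr : ¬ PeriodicOn w i j r) :
    ∃ m, i ≤ m ∧ m < i + q ∧ m + r ≤ j ∧ w[m]? ≠ w[m + r]? ∧
      ∀ z, i ≤ z → z < m → w[z]? = w[z + r]? := by
  obtain ⟨m, him, hmj, hne, hfirst⟩ := exists_first_mismatch hr
  refine ⟨m, him, ?_, hmj, hne, hfirst⟩
  by_contra! hm
  refine hne ?_
  have h₁ := hq (m - q) (by omega) (by omega)
  have h₂ := hq (m - q + r) (by omega) (by omega)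
  rw [Nat.sub_add_cancel (by omega)] at h₁
  rw [show m - q + r + q = m + r by omega] at h₂
  rw [← h₁, ← h₂]
  exact hfirst (m - q) (by omega) (by omega)

end PeriodicOn

theorem List.IsPrefix.not_lex {R : α → α → Prop} [Std.Irrefl R] {l₁ l₂ : List α}
    (h : l₁ <+: l₂) : ¬ Lex R l₂ l₁ := by
  obtain ⟨t, rfl⟩ := h
  induction l₁ with
  | nil => exact not_lex_nil
  | cons a l ih =>
    rw [cons_append, cons_lex_cons_iff]
    rintro (h | ⟨-, h⟩)
    exacts [Std.Irrefl.irrefl a h, ih h]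

theorem List.Lex.rel_of_getElem?_ne {R : α → α → Prop} [Std.Irrefl R] :
    ∀ {n : ℕ} {l₁ l₂ : List α} {a b : α}, Lex R l₁ l₂ → (∀ s < n, l₁[s]? = l₂[s]?) →
      l₁[n]? = some a → l₂[n]? = some b → a ≠ b → R a b
  | _, [], _, _, _, _, _, ha, _, _ => by simp at ha
  | _, _ :: _, [], _, _, _, _, _, hb, _ => by simp at hb
  | 0, c :: l₁, d :: l₂, a, b, h, _, ha, hb, hab => by
    simp only [getElem?_cons_zero, Option.some.injEq] at ha hb
    subst ha hb
    exact (cons_lex_cons_iff.1 h).resolve_right fun h => hab h.1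
  | n + 1, c :: l₁, d :: l₂, a, b, h, heq, ha, hb, hab => by
    obtain rfl : c = d := by simpa using heq 0 (by omega)
    have htail := ((cons_lex_cons_iff.1 h).resolve_left (Std.Irrefl.irrefl c)).2
    refine htail.rel_of_getElem?_ne (n := n) (fun s hs => by simpa using heq (s + 1) (by omega))
      ?_ ?_ hab <;> simpa

def SomeRel (R : α → α → Prop) (o₁ o₂ : Option α) : Prop :=
  ∃ a b, o₁ = some a ∧ o₂ = some b ∧ R a b

theorem SomeRel.false_of_disjoint {R₁ R₂ : α → α → Prop} {o₁ o₂ : Option α}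
    (h₁ : SomeRel R₁ o₁ o₂) (h₂ : SomeRel R₂ o₁ o₂) (hR : ∀ a b, R₁ a b → ¬ R₂ a b) : False := by
  obtain ⟨a, b, rfl, rfl, hab⟩ := h₁
  obtain ⟨_, _, ⟨⟩, ⟨⟩, hab'⟩ := h₂
  exact hR a b hab hab'

theorem SomeRel.asymm {R : α → α → Prop} [Std.Asymm R] {o₁ o₂ : Option α}
    (h : SomeRel R o₁ o₂) : ¬ SomeRel R o₂ o₁ := by
  rintro ⟨b, a, rfl, rfl, hba⟩
  obtain ⟨_, _, ⟨⟩, ⟨⟩, hab⟩ := h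
  exact Std.Asymm.asymm a b hab hba

theorem factor_prefix_of_periodicOn {w : List α} {t k j : ℕ} (htk : t ≤ k) (hkj : k ≤ j)
    (hj : j < w.length) (h : PeriodicOn w t j (k - t)) : factor w k j <+: factor w t j := by
  rw [prefix_iff_eq_take]
  refine ext_getElem? fun s => ?_
  rw [length_factor hkj hj, getElem?_take]
  split_ifs with hs
  · rw [getElem?_factor w hs, getElem?_factor w (by omega), h (t + s) (by omega) (by omega)]
    congr 1
    omega
  · exact getElem?_eq_none (by rw [length_factor hkj hj]; omega)

namespace IsGreatestProperSuffixPos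

variable {R : α → α → Prop} {w : List α} {i j k : ℕ}

theorem not_periodicOn [Std.Irrefl R] (hG : IsGreatestProperSuffixPos (Lex R) w i j k)
    (hj : j < w.length) {t : ℕ} (hit : i < t) (htk : t < k) : ¬ PeriodicOn w t j (k - t) :=
  fun h => (factor_prefix_of_periodicOn htk.le hG.2.1 hj h).not_lex
    (hG.2.2 t hit (htk.le.trans hG.2.1) htk.ne)

theorem le_add_of_periodicOn [Std.Irrefl R] (hG : IsGreatestProperSuffixPos (Lex R) w i j k)
    (hj : j < w.length) {i' q : ℕ} (h : PeriodicOn w i' j q) (hi : i ≤ i') (hq : 1 ≤ q) :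
    k ≤ i' + q := by
  by_contra! hk
  refine hG.not_periodicOn hj (t := k - q) (by omega) (by omega) ?_
  rw [Nat.sub_sub_self (by omega)]
  exact h.mono (by omega) le_rfl

theorem someRel_of_first_mismatch [Std.Irrefl R]
    (hG : IsGreatestProperSuffixPos (Lex R) w i j k) (hj : j < w.length) {t s : ℕ}
    (hit : i < t) (htk : t ≠ k) (hts : t + s ≤ j) (hks : k + s ≤ j)
    (heq : ∀ s' < s, w[t + s']? = w[k + s']?) (hne : w[t + s]? ≠ w[k + s]?) :
    SomeRel R w[t + s]? w[k + s]? := by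
  refine ⟨_, _, getElem?_eq_getElem (by omega), getElem?_eq_getElem (by omega), ?_⟩
  refine (hG.2.2 t hit (by omega) htk).rel_of_getElem?_ne (n := s) (fun s' hs' => ?_) ?_ ?_ ?_
  · rw [getElem?_factor w (by omega), getElem?_factor w (by omega)]
    exact heq s' hs'
  · rw [getElem?_factor w (by omega)]
    exact getElem?_eq_getElem (by omega)
  · rw [getElem?_factor w (by omega)]
    exact getElem?_eq_getElem (by omega)
  · intro hab
    rw [getElem?_eq_getElem (by omega), getElem?_eq_getElem (by omega), hab] at hne
    exact hne rfl

/-- The suffixes at `k - r` and at `k + r` both first differ from the one at `k` at the first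
break of the shift by `r`, but compare the same two letters there in opposite directions. -/
theorem getElem?_eq_getElem?_add [Std.Asymm R] (hG : IsGreatestProperSuffixPos (Lex R) w i j k)
    (hj : j < w.length) {r m : ℕ} (hr : i + r < k) (hkm : k ≤ m) (hmj : m + r ≤ j)
    (hper : ∀ z, k - r ≤ z → z < m → w[z]? = w[z + r]?) : w[m]? = w[m + r]? := by
  obtain rfl | hr0 := r.eq_zero_or_pos
  · rfl
  by_contra hne
  have hleft := hG.someRel_of_first_mismatch hj (t := k - r) (s := m + r - k) (by omega)
    (by omega) (by omega) (by omega)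
    (fun s hs => by rw [hper (k - r + s) (by omega) (by omega)]; congr 1; omega)
    (by rwa [show k - r + (m + r - k) = m by omega, show k + (m + r - k) = m + r by omega])
  have hright := hG.someRel_of_first_mismatch hj (t := k + r) (s := m - k) (by omega)
    (by omega) (by omega) (by omega)
    (fun s hs => by rw [hper (k + s) (by omega) (by omega)]; congr 1; omega)
    (by rw [show k + r + (m - k) = m + r by omega, show k + (m - k) = m by omega]
        exact Ne.symm hne)
  rw [show k - r + (m + r - k) = m by omega, show k + (m + r - k) = m + r by omega] at hleft
  rw [show k + r + (m - k) = m + r by omega, show k + (m - k) = m by omega] at hright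
  exact hleft.asymm hright

/-- Under disjoint orders, a first difference between the suffixes at `t` and at `k` would
have to be related both ways. -/
theorem getElem?_eq_of_disjoint {R₂ : α → α → Prop} [Std.Irrefl R] [Std.Irrefl R₂]
    (hR : ∀ a b, R a b → ¬ R₂ a b) {i₂ j₂ : ℕ} (hG : IsGreatestProperSuffixPos (Lex R) w i j k)
    (hG₂ : IsGreatestProperSuffixPos (Lex R₂) w i₂ j₂ k) (hj : j < w.length)
    (hj₂ : j₂ < w.length) (hjj₂ : j ≤ j₂) {t : ℕ} (hit : i < t) (hi₂t : i₂ < t) (htk : t ≠ k) :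
    ∀ s, t + s ≤ j → k + s ≤ j → w[t + s]? = w[k + s]? := by
  intro s
  induction s using Nat.strong_induction_on with
  | _ s ih =>
    intro hts hks
    by_contra hne
    have heq : ∀ s' < s, w[t + s']? = w[k + s']? := fun s' hs' => ih s' hs' (by omega) (by omega)
    exact (hG.someRel_of_first_mismatch hj hit htk hts hks heq hne).false_of_disjoint
      (hG₂.someRel_of_first_mismatch hj₂ hi₂t htk (by omega) (by omega) heq hne) hR

end IsGreatestProperSuffixPos

namespace IsRun

variable {w : List α} {i j i' j' k : ℕ}

theorem periodicOn (h : IsRun w i j) : PeriodicOn w i j (minPeriod (factor w i j)) :=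
  periodicOn_minPeriod h.1.le h.2.1

theorem getElem?_succ_ne (h : IsRun w i j) (hn : j + 1 < w.length) :
    w[j + 1]? ≠ w[j + 1 - minPeriod (factor w i j)]? := by
  intro heq
  have hp := one_le_minPeriod (factor w i j)
  have hper : PeriodicOn w i (j + 1) (minPeriod (factor w i j)) := by
    intro x hix hx
    rcases hx.lt_or_eq with hx | hx
    · exact h.periodicOn x hix (by omega)
    · rw [hx, show x = j + 1 - minPeriod (factor w i j) by omega]
      exact heq.symm
  exact (h.2.2.2.2 hn).not_ge (minPeriod_factor_le hp hper)

theorem minPeriod_lt_of_periodicOn_pred (h : IsRun w i j) (hi : 0 < i) {q : ℕ} (hq : 1 ≤ q)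
    (hper : PeriodicOn w (i - 1) j q) : minPeriod (factor w i j) < q :=
  (h.2.2.2.1 hi).trans_le (minPeriod_factor_le hq hper)

theorem le_add_minPeriod_of_isGreatest {R : α → α → Prop} [Std.Irrefl R] (h : IsRun w i j)
    (hG : IsGreatestProperSuffixPos (Lex R) w i j k) : k ≤ i + minPeriod (factor w i j) :=
  hG.le_add_of_periodicOn h.2.1 h.periodicOn le_rfl (one_le_minPeriod _)

/-- With `p` the smallest period of `[i..j]`, the suffixes at `k + p` and at `k` first differ
at `j + 1`, where this period breaks. -/
theorem someRel_succ {R : α → α → Prop} [Std.Irrefl R] (h : IsRun w i j) (hik : i < k)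
    (hkp : k ≤ i + minPeriod (factor w i j)) (hG' : IsGreatestProperSuffixPos (Lex R) w i' j' k)
    (hj' : j' < w.length) (hjj' : j < j') :
    SomeRel R w[j + 1]? w[j + 1 - minPeriod (factor w i j)]? := by
  have h2p := h.2.2.1
  have hp1 := one_le_minPeriod (factor w i j)
  set p := minPeriod (factor w i j)
  have hi'k := hG'.1
  have := hG'.someRel_of_first_mismatch hj' (t := k + p) (s := j + 1 - p - k) (by omega)
    (by omega) (by omega) (by omega)
    (fun s hs => by rw [h.periodicOn (k + s) (by omega) (by omega)]; congr 1; omega)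
    (by
      rw [show k + p + (j + 1 - p - k) = j + 1 by omega,
        show k + (j + 1 - p - k) = j + 1 - p by omega]
      exact h.getElem?_succ_ne (by omega))
  rwa [show k + p + (j + 1 - p - k) = j + 1 by omega,
    show k + (j + 1 - p - k) = j + 1 - p by omega] at this

theorem start_le_of_isGreatest {R : α → α → Prop} [Std.Asymm R] (h : IsRun w i j)
    (h' : IsRun w i' j) (hG : IsGreatestProperSuffixPos (Lex R) w i j k) (hi'k : i' < k) :
    i' ≤ i := by
  by_contra! hii'
  have hj := h.2.1
  have h2p := h.2.2.1
  have hp := h.periodicOn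
  have hq := h'.periodicOn
  have hq1 := one_le_minPeriod (factor w i' j)
  set p := minPeriod (factor w i j)
  set q := minPeriod (factor w i' j)
  have hqp : q < p :=
    h'.minPeriod_lt_of_periodicOn_pred (by omega) (one_le_minPeriod _) (hp.mono (by omega) le_rfl)
  have hkp : k ≤ i + p := h.le_add_minPeriod_of_isGreatest hG
  have hkq : k < i' + q := by
    refine (hG.le_add_of_periodicOn hj hq hii'.le hq1).lt_of_ne fun hk => ?_
    refine hG.not_periodicOn hj hii' hi'k ?_
    rwa [hk, Nat.add_sub_cancel_left]
  have hndvd : ¬ q ∣ p := fun hdvd =>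
    hqp.not_ge (minPeriod_factor_le hq1 (hp.of_dvd hq hdvd (by omega) (by omega)))
  set r := p % q
  have hr0 : 0 < r := Nat.pos_of_ne_zero fun h0 => hndvd (Nat.dvd_of_mod_eq_zero h0)
  have hrq : r < q := Nat.mod_lt _ (by omega)
  have hrp : r + q ≤ p := by
    have := Nat.div_add_mod p q
    have : q ≤ q * (p / q) := Nat.le_mul_of_pos_right q (Nat.div_pos hqp.le (by omega))
    omega
  -- shifting by `r` and by `p` agree inside `[i'..j]`, since `p ≡ r [MOD q]`
  have hcong : ∀ z, i' ≤ z + r → z + p ≤ j → w[z + r]? = w[z + p]? := fun z hz hzp =>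
    hq.getElem?_eq_of_modEq hz (by omega) (by omega) hzp
      ((Nat.mod_modEq p q).add_left z)
  obtain ⟨m, hi'm, hmq, hmj, hne, hfirst⟩ :=
    hq.exists_first_mismatch_lt_add hq1 fun hr => hrq.not_ge (minPeriod_factor_le hr0 hr)
  have hmp : j < m + p := by
    by_contra! hm
    exact hne ((hp m (by omega) hm).trans (hcong m (by omega) hm).symm)
  refine hne (hG.getElem?_eq_getElem?_add hj (by omega) (by omega) hmj fun z hz hzm => ?_)
  rcases le_or_gt i' z with hz' | hz'
  · exact hfirst z hz' hzm
  · exact (hp z (by omega) (by omega)).trans (hcong z (by omega) (by omega)).symm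

theorem periodicOn_one_of_disjoint {R₁ R₂ : α → α → Prop} [Std.Irrefl R₁] [Std.Irrefl R₂]
    (h : IsRun w i j) (h' : IsRun w i' j') (hG : IsGreatestProperSuffixPos (Lex R₁) w i j k)
    (hG' : IsGreatestProperSuffixPos (Lex R₂) w i' j' k) (hR : ∀ a b, R₁ a b → ¬ R₂ a b)
    (hjj' : j ≤ j') : PeriodicOn w i j 1 := by
  have h2p := h.2.2.1
  have hp := h.periodicOn
  have hkp := h.le_add_minPeriod_of_isGreatest hG
  have hik := hG.1
  have hi'k := hG'.1
  have hconstK : PeriodicOn w k j 1 := fun x hkx hx => by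
    have := hG.getElem?_eq_of_disjoint hR hG' h.2.1 h'.2.1 hjj' (t := k + 1) (by omega)
      (by omega) (by omega) (x - k) (by omega) (by omega)
    rwa [show k + 1 + (x - k) = x + 1 by omega, show k + (x - k) = x by omega, eq_comm] at this
  have hconst : ∀ y, i ≤ y → y ≤ j → w[y]? = w[j]? := by
    intro y hiy hyj
    rcases le_or_gt k y with hky | hky
    · exact hconstK.getElem?_eq_of_modEq hky hyj (by omega) le_rfl Nat.modEq_one
    · rw [hp y hiy (by omega)]
      exact hconstK.getElem?_eq_of_modEq (by omega) (by omega) (by omega) le_rfl Nat.modEq_one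
  exact fun x hix hx => (hconst x hix (by omega)).trans (hconst (x + 1) (by omega) hx).symm

theorem someRel_of_periodicOn_one {R : α → α → Prop} [Std.Irrefl R] (h : IsRun w i j')
    (hG : IsGreatestProperSuffixPos (Lex R) w i j' (i + 1)) (h1 : PeriodicOn w i j 1)
    (hij : i ≤ j) (hjj' : j < j') (hbreak : w[j + 1]? ≠ w[j]?) : SomeRel R w[j]? w[j + 1]? := by
  have hj' := h.2.1
  have h2q := h.2.2.1
  have hq := h.periodicOn
  have hq1 := one_le_minPeriod (factor w i j')
  generalize minPeriod (factor w i j') = q at hq h2q hq1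
  have hconst : ∀ y, i ≤ y → y ≤ j → w[y]? = w[j]? := fun y hiy hyj =>
    h1.getElem?_eq_of_modEq hiy hyj (by omega) le_rfl Nat.modEq_one
  have hjq : j + 1 - i < q := by
    by_contra! hq'
    refine hbreak ?_
    have := hq (j + 1 - q) (by omega) (by omega)
    rw [Nat.sub_add_cancel (by omega)] at this
    rw [← this]
    exact hconst _ (by omega) (by omega)
  -- the suffix at `i + q` starts with one more copy of `w[j]` than the suffix at `i + 1`
  have hjq' : w[j + q]? = w[j]? := (hq j (by omega) (by omega)).symm
  have := hG.someRel_of_first_mismatch hj' (t := i + q) (s := j - i) (by omega)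
    (by omega) (by omega) (by omega)
    (fun s hs => by
      rw [Nat.add_right_comm, ← hq (i + s) (by omega) (by omega)]
      exact (hconst _ (by omega) (by omega)).trans (hconst _ (by omega) (by omega)).symm)
    (by
      rw [show i + q + (j - i) = j + q by omega, show i + 1 + (j - i) = j + 1 by omega, hjq']
      exact Ne.symm hbreak)
  rwa [show i + q + (j - i) = j + q by omega, show i + 1 + (j - i) = j + 1 by omega,
    hjq'] at this

theorem end_le_of_disjoint {R₁ R₂ : α → α → Prop} [Std.Irrefl R₁] [Std.Asymm R₂]
    (h : IsRun w i j) (h' : IsRun w i' j') (hG : IsGreatestProperSuffixPos (Lex R₁) w i j k)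
    (hG' : IsGreatestProperSuffixPos (Lex R₂) w i' j' k) (hR : ∀ a b, R₁ a b → ¬ R₂ a b) :
    j' ≤ j := by
  by_contra! hjj'
  have hkj := hG.2.1
  have h1 := h.periodicOn_one_of_disjoint h' hG hG' hR hjj'.le
  have hp1 : minPeriod (factor w i j) = 1 :=
    le_antisymm (minPeriod_factor_le le_rfl h1) (one_le_minPeriod _)
  have hkp := h.le_add_minPeriod_of_isGreatest hG
  have hbreak := h.getElem?_succ_ne (by have := h'.2.1; omega)
  have hext := h.someRel_succ hG.1 hkp hG' h'.2.1 hjj'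
  rw [hp1] at hkp hbreak hext
  rw [Nat.add_sub_cancel] at hbreak hext
  obtain rfl : k = i + 1 := by have := hG.1; omega
  rcases (show i' ≤ i by have := hG'.1; omega).lt_or_eq with hi' | rfl
  · exact hbreak (hG'.getElem?_eq_getElem?_add h'.2.1 (r := 1) (by omega) hkj (by omega)
      fun z hz hzj => h1 z (by omega) (by omega)).symm
  · exact hext.asymm (h'.someRel_of_periodicOn_one hG' h1 (by omega) hjj' hbreak)

end IsRun

namespace AssignedPos

variable [LinearOrder α] {w : List α} {i j i' j' k : ℕ}

theorem isGreatest (ha : AssignedPos w i j k) :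
    IsGreatestProperSuffixPos (Lex (· < ·)) w i j k ∨
      IsGreatestProperSuffixPos (Lex (· > ·)) w i j k :=
  (em _).imp ha.1 ha.2

theorem start_le (h : IsRun w i j) (h' : IsRun w i' j) (ha : AssignedPos w i j k)
    (ha' : AssignedPos w i' j k) : i' ≤ i := by
  have hi'k : i' < k := ha'.isGreatest.elim (·.1) (·.1)
  rcases ha.isGreatest with hG | hG <;> exact h.start_le_of_isGreatest h' hG hi'k

theorem end_le (h : IsRun w i j) (h' : IsRun w i' j') (ha : AssignedPos w i j k)
    (ha' : AssignedPos w i' j' k) : j' ≤ j := by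
  by_contra! hjj'
  have hj' := h'.2.1
  obtain ⟨hik, hkp⟩ : i < k ∧ k ≤ i + minPeriod (factor w i j) := by
    rcases ha.isGreatest with hG | hG <;> exact ⟨hG.1, h.le_add_minPeriod_of_isGreatest hG⟩
  rcases ha'.isGreatest with hG' | hG'
  · have hext := h.someRel_succ hik hkp hG' hj' hjj'
    have hG := ha.2 fun hC => hext.false_of_disjoint hC.2 fun _ _ => lt_asymm
    exact hjj'.not_ge (h.end_le_of_disjoint h' hG hG' fun _ _ => lt_asymm)
  · have hG := ha.1 ⟨by omega, h.someRel_succ hik hkp hG' hj' hjj'⟩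
    exact hjj'.not_ge (h.end_le_of_disjoint h' hG hG' fun _ _ => lt_asymm)

end AssignedPos

theorem assigned_position_unique_general {α : Type u} [LinearOrder α] (w : List α) (k : ℕ)
    (i j i' j' : ℕ)
    (h : IsRun w i j) (h' : IsRun w i' j')
    (ha : AssignedPos w i j k) (ha' : AssignedPos w i' j' k) :
    i = i' ∧ j = j' := by
  obtain rfl : j = j' := le_antisymm (ha'.end_le h' h ha) (ha.end_le h h' ha')
  exact ⟨le_antisymm (ha'.start_le h' h ha) (ha.start_le h h' ha'), rfl⟩

/-- Each position `k > 0` is the starting position of the assigned greatest proper suffix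
of at most one run. -/
theorem assigned_position_unique {α : Type u} [LinearOrder α] (w : List α) (k : ℕ)
    (hk : 0 < k) (i j i' j' : ℕ)
    (h : IsRun w i j) (h' : IsRun w i' j')
    (ha : AssignedPos w i j k) (ha' : AssignedPos w i' j' k) :
    i = i' ∧ j = j' :=
  assigned_position_unique_general w k i j i' j' h h' ha ha'
end

section
/- If p and q are words such that some word has a factor admitting period lengths |p| and |q| and of length |p| + |q|, then p and q are powers of a common word (both are powers of some word r). -/
open List

universe u

/-- `listPow u n` is the `n`-th power `u^n` of the word `u`. -/
def listPow {α : Type u} (v : List α) : ℕ → List α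
  | 0 => []
  | n + 1 => v ++ listPow v n

/-- A word is primitive if it is not a proper power. -/
def Primitive {α : Type u} (v : List α) : Prop :=
  v ≠ [] ∧ ∀ r n, 2 ≤ n → v ≠ listPow r n

/-- `c` is a conjugate (rotation) of `v`. -/
def IsConjWord {α : Type u} (v c : List α) : Prop := ∃ s t, v = s ++ t ∧ c = t ++ s

/-!
Weak form of the Fine–Wilf periodicity lemma: if a word of length at least `a + b` has periods
`a < b`, then `b - a` is again a period (positions below `a` are moved through `+ b` and back
by `- a`, the others through `- a` and then `+ b`), so Euclid's subtraction algorithm shows that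
`gcd a b` is a period. A word of length `|p| + |q|` with period `d = gcd |p| |q|` is the
`(|p| + |q|) / d`-th power of its prefix `r` of length `d`; as `d` divides `|p|`, the prefix `p`
and the suffix `q` are then powers of `r` as well.
-/

section ListPow

variable {α : Type u}

theorem length_listPow (v : List α) (n : ℕ) : (listPow v n).length = n * v.length := by
  induction n with
  | zero => simp [listPow]
  | succ n ih => simp [listPow, ih, Nat.succ_mul, Nat.add_comm]

theorem listPow_add (v : List α) (k m : ℕ) :
    listPow v (k + m) = listPow v k ++ listPow v m := by
  induction k with
  | zero => simp [listPow]
  | succ k ih => simp [Nat.succ_add, listPow, ih]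

theorem getElem?_listPow (v : List α) {n k : ℕ} (hk : k < n * v.length) :
    (listPow v n)[k]? = v[k % v.length]? := by
  induction n generalizing k with
  | zero => omega
  | succ n ih =>
    rw [Nat.succ_mul] at hk
    rw [listPow, getElem?_append]
    rcases lt_or_ge k v.length with h | h
    · rw [if_pos h, Nat.mod_eq_of_lt h]
    · rw [if_neg (by omega), ih (by omega), Nat.mod_eq_sub_mod h]

end ListPow

namespace HasPeriodLen

variable {α : Type u} {z : List α}

theorem getElem?_mod {d : ℕ} (h : HasPeriodLen z d) {i : ℕ} (hi : i < z.length) :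
    z[i]? = z[i % d]? := by
  induction i using Nat.strong_induction_on with
  | _ i ih =>
    rcases lt_or_ge i d with hid | hid
    · rw [Nat.mod_eq_of_lt hid]
    · have hstep := h.2 (i - d) (by omega)
      rw [Nat.sub_add_cancel hid] at hstep
      rw [← hstep, ih (i - d) (by have := h.1; omega) (by omega), Nat.mod_eq_sub_mod hid]

theorem sub {a b : ℕ} (ha : HasPeriodLen z a) (hb : HasPeriodLen z b) (hab : a < b)
    (hlen : a + b ≤ z.length) : HasPeriodLen z (b - a) := by
  refine ⟨by omega, fun k hk => ?_⟩
  rcases le_or_gt a k with hak | hka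
  · have e1 := ha.2 (k - a) (by omega)
    have e2 := hb.2 (k - a) (by omega)
    rw [Nat.sub_add_cancel hak] at e1
    rw [← e1, e2, show k - a + b = k + (b - a) by omega]
  · have e1 := hb.2 k (by omega)
    have e2 := ha.2 (k + (b - a)) (by omega)
    rw [show k + (b - a) + a = k + b by omega] at e2
    rw [e1, e2]

theorem gcd {a b : ℕ} (ha : HasPeriodLen z a) (hb : HasPeriodLen z b)
    (hlen : a + b ≤ z.length) : HasPeriodLen z (Nat.gcd a b) := by
  have := ha.1
  have := hb.1
  rcases lt_trichotomy a b with hab | rfl | hab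
  · rw [← Nat.gcd_sub_self_right hab.le]
    exact ha.gcd (ha.sub hb hab hlen) (by omega)
  · rwa [Nat.gcd_self]
  · rw [← Nat.gcd_sub_self_left hab.le]
    exact (hb.sub ha hab (by omega)).gcd hb (by omega)
termination_by a + b

theorem eq_listPow_take {d n : ℕ} (h : HasPeriodLen z d) (hlen : z.length = d * n) :
    z = listPow (z.take d) n := by
  rcases Nat.eq_zero_or_pos n with rfl | hn
  · simpa [listPow] using hlen
  have hd : (z.take d).length = d :=
    length_take_of_le (by rw [hlen]; exact Nat.le_mul_of_pos_right d hn)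
  apply ext_getElem?
  intro i
  rcases lt_or_ge i z.length with hi | hi
  · have hmod : i % d < d := Nat.mod_lt _ (by have := h.1; omega)
    rw [getElem?_listPow _ (by rw [hd]; linarith), hd, getElem?_take, if_pos hmod,
      h.getElem?_mod hi]
  · rw [getElem?_eq_none hi, getElem?_eq_none (by rw [length_listPow, hd]; linarith)]

end HasPeriodLen

/-- Periodicity lemma application: if a word of length `|p| + |q|` has `p` as a prefix,
`q` as a suffix, and admits both `|p|` and `|q|` as period lengths, then `p` and `q` are
powers of a common word. -/
theorem roots_powers_of_common_word {α : Type u} (p q z : List α)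
    (hlen : z.length = p.length + q.length)
    (hp : p <+: z) (hq : q <:+ z)
    (hpp : HasPeriodLen z p.length) (hqp : HasPeriodLen z q.length) :
    ∃ r k m, p = listPow r k ∧ q = listPow r m := by
  set d := Nat.gcd p.length q.length
  obtain ⟨k, hk⟩ := Nat.gcd_dvd_left p.length q.length
  obtain ⟨m, hm⟩ := Nat.gcd_dvd_right p.length q.length
  set r := z.take d
  have hrd : r.length = d :=
    length_take_of_le ((Nat.gcd_le_left _ hpp.1).trans (by omega))
  have hz : z = listPow r k ++ listPow r m := by
    rw [← listPow_add]
    exact (hpp.gcd hqp hlen.ge).eq_listPow_take (by rw [hlen, Nat.mul_add, ← hk, ← hm])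
  have hpk : (listPow r k).length = p.length := by
    rw [length_listPow, hrd, hk, Nat.mul_comm]
  refine ⟨r, k, m, ?_, ?_⟩
  · rw [prefix_iff_eq_take.mp hp, hz, ← hpk, take_left]
  · rw [suffix_iff_eq_drop.mp hq, show z.length - q.length = p.length by omega, hz, ← hpk,
      drop_left]
end
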